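/- arXiv:0811.3452 — 3 statements merged into one kernel-verified Lean document; each statement's English description precedes it below -/
import Mathlib

section
/- Let F(z_1,...,z_n) = ∏_{i=1}^n (1-z_i)^{-1}, expanded as an infinite series of monomials in z_1,...,z_n. Suppose 0 < r ≤ r_0 < 1 and there is a positive integer m ≤ n such that |z_i| ≤ r for i ≤ m and |z_i| < r^2 for i > m. If f(z_1,...,z_n) is any subseries of the series for F containing the terms 1 + ∑_{i=1}^m z_i, then |F(z_1,...,z_n) − f(z_1,...,z_n)| ≤ [n(n+1)/(2(1−r_0)^{n+2}) + n]·r^2. -/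
/-!
The difference `F - f` is the sum of the monomials `z ^ a` with `a ∉ S`. Such an `a` has degree
at least two, or is `e i` with `m ≤ i`, and those last terms contribute at most `n r²` since then
`‖z i‖ < r²`. A multi-index of degree at least two is `e i + e j + b` for an unordered pair
`{i, j}`, so these terms are bounded by `#Sym2 (Fin n) · r² · ∏ (1 - ‖z i‖)⁻¹`, where
`#Sym2 (Fin n) = n (n + 1) / 2` and `∏ (1 - ‖z i‖)⁻¹ ≤ (1 - r₀)⁻ⁿ ≤ (1 - r₀)⁻⁽ⁿ⁺²⁾`.
-/

open Finset

section MultiIndex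

variable {ι : Type*}

theorem prod_pow_add_apply [Fintype ι] {M : Type*} [CommMonoid M] (w : ι → M) (a b : ι → ℕ) :
    ∏ i, w i ^ (a + b) i = (∏ i, w i ^ a i) * ∏ i, w i ^ b i := by
  simp only [Pi.add_apply, pow_add, prod_mul_distrib]

theorem exists_eq_single_one_add [DecidableEq ι] {a : ι → ℕ} (ha : a ≠ 0) :
    ∃ i, ∃ b : ι → ℕ, a = Pi.single i 1 + b := by
  obtain ⟨i, hi⟩ := Function.ne_iff.mp ha
  refine ⟨i, a - Pi.single i 1, funext fun j => ?_⟩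
  rcases eq_or_ne j i with rfl | hj
  · simp only [Pi.add_apply, Pi.sub_apply, Pi.single_eq_same, Pi.zero_apply] at hi ⊢
    omega
  · simp [Pi.single_eq_of_ne hj]

variable [Fintype ι] [DecidableEq ι]

theorem prod_pow_single_one {M : Type*} [CommMonoid M] (w : ι → M) (i : ι) :
    ∏ j, w j ^ (Pi.single i 1 : ι → ℕ) j = w i := by
  rw [prod_eq_single i (fun j _ hj => by rw [Pi.single_eq_of_ne hj, pow_zero]) (by simp),
    Pi.single_eq_same, pow_one]

theorem sum_single_one_add (i : ι) (b : ι → ℕ) :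
    ∑ j, (Pi.single i 1 + b : ι → ℕ) j = ∑ j, b j + 1 := by
  simp [sum_add_distrib, add_comm]

theorem eq_zero_or_exists_eq_single_of_sum_lt_two {a : ι → ℕ} (ha : ∑ i, a i < 2) :
    a = 0 ∨ ∃ i, a = Pi.single i 1 := by
  by_cases h : a = 0
  · exact Or.inl h
  obtain ⟨i, b, rfl⟩ := exists_eq_single_one_add h
  rw [sum_single_one_add] at ha
  have hb : b = 0 := funext fun j => (sum_eq_zero_iff.mp (by omega : ∑ j, b j = 0)) j (mem_univ j)
  exact Or.inr ⟨i, by rw [hb, add_zero]⟩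

def pairIndex : Sym2 ι → ι → ℕ :=
  Sym2.lift ⟨fun i j => Pi.single i 1 + Pi.single j 1, fun _ _ => add_comm _ _⟩

theorem prod_pow_pairIndex {M : Type*} [CommMonoid M] (w : ι → M) (i j : ι) :
    ∏ k, w k ^ pairIndex s(i, j) k = w i * w j := by
  rw [pairIndex, Sym2.lift_mk, prod_pow_add_apply, prod_pow_single_one, prod_pow_single_one]

theorem exists_pairIndex_add_eq_of_two_le {a : ι → ℕ} (ha : 2 ≤ ∑ i, a i) :
    ∃ x : Sym2 ι × (ι → ℕ), pairIndex x.1 + x.2 = a := by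
  obtain ⟨i, b, rfl⟩ := exists_eq_single_one_add (a := a) (by rintro rfl; simp at ha)
  rw [sum_single_one_add] at ha
  obtain ⟨j, c, rfl⟩ := exists_eq_single_one_add (a := b) (by rintro rfl; simp at ha)
  exact ⟨(s(i, j), c), by rw [pairIndex, Sym2.lift_mk, add_assoc]⟩

end MultiIndex

theorem summable_norm_prod_pow_and_tsum_eq {K : Type*} [NormedField K] [CompleteSpace K] :
    ∀ {n : ℕ} (z : Fin n → K), (∀ i, ‖z i‖ < 1) →
      Summable (fun a : Fin n → ℕ => ‖∏ i, z i ^ a i‖) ∧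
        ∑' a : Fin n → ℕ, ∏ i, z i ^ a i = ∏ i, (1 - z i)⁻¹
  | 0, _, _ => ⟨Summable.of_finite, by simp⟩
  | n + 1, z, hz => by
    obtain ⟨hs, ht⟩ := summable_norm_prod_pow_and_tsum_eq (fun i => z i.succ) (fun i => hz i.succ)
    have hg : Summable (fun k : ℕ => ‖z 0 ^ k‖) := by
      simpa using summable_geometric_of_lt_one (norm_nonneg (z 0)) (hz 0)
    let e := Fin.consEquiv (fun _ : Fin (n + 1) => ℕ)
    have he : ∀ p : ℕ × (Fin n → ℕ),
        ∏ i, z i ^ e p i = z 0 ^ p.1 * ∏ i : Fin n, z i.succ ^ p.2 i := fun p => by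
      simp [e, Fin.consEquiv, Fin.prod_univ_succ]
    constructor
    · refine e.summable_iff.mp ((Summable.mul_norm hg hs).congr fun p => ?_)
      simp only [Function.comp_apply, he]
    · rw [← e.tsum_eq, tsum_congr he, ← tsum_mul_tsum_of_summable_norm hg hs,
        tsum_geometric_of_norm_lt_one (hz 0), ht, Fin.prod_univ_succ]

section Estimates

variable {ι : Type*} [Fintype ι] [DecidableEq ι] {w : ι → ℝ} {r : ℝ}

theorem tsum_prod_pow_of_two_le_sum_le (hw0 : ∀ i, 0 ≤ w i) (hwr : ∀ i, w i ≤ r)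
    (hs : Summable fun a : ι → ℕ => ∏ i, w i ^ a i) :
    ∑' a : {a : ι → ℕ | 2 ≤ ∑ i, a i}, ∏ i, w i ^ (a : ι → ℕ) i
      ≤ Fintype.card (Sym2 ι) * r ^ 2 * ∑' a : ι → ℕ, ∏ i, w i ^ a i := by
  have hP0 : ∀ a : ι → ℕ, 0 ≤ ∏ i, w i ^ a i := fun a => prod_nonneg fun i _ => pow_nonneg (hw0 i) _
  choose e he using fun a : {a : ι → ℕ | 2 ≤ ∑ i, a i} => exists_pairIndex_add_eq_of_two_le a.2
  have he_inj : Function.Injective e := fun a b h => Subtype.ext (by rw [← he a, ← he b, h])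
  have hpair : ∀ p : Sym2 ι, ∏ i, w i ^ pairIndex p i ≤ r ^ 2 := by
    refine Sym2.ind fun i j => ?_
    rw [prod_pow_pairIndex, sq]
    exact mul_le_mul (hwr i) (hwr j) (hw0 j) ((hw0 i).trans (hwr i))
  have hpair_summable : Summable fun p : Sym2 ι => ∏ i, w i ^ pairIndex p i := Summable.of_finite
  have hprod : Summable fun x : Sym2 ι × (ι → ℕ) =>
      (∏ i, w i ^ pairIndex x.1 i) * ∏ i, w i ^ x.2 i :=
    hpair_summable.mul_of_nonneg hs (fun p => hP0 (pairIndex p)) hP0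
  calc ∑' a : {a : ι → ℕ | 2 ≤ ∑ i, a i}, ∏ i, w i ^ (a : ι → ℕ) i
      ≤ ∑' x : Sym2 ι × (ι → ℕ), (∏ i, w i ^ pairIndex x.1 i) * ∏ i, w i ^ x.2 i := by
        refine Summable.tsum_le_tsum_of_inj e he_inj (fun x _ => mul_nonneg (hP0 _) (hP0 _))
          (fun a => ?_) (hs.subtype _) hprod
        rw [← prod_pow_add_apply, he]
    _ = (∑ p : Sym2 ι, ∏ i, w i ^ pairIndex p i) * ∑' a : ι → ℕ, ∏ i, w i ^ a i := by
        rw [← tsum_fintype (L := SummationFilter.unconditional _)]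
        exact (hpair_summable.tsum_mul_tsum hs hprod).symm
    _ ≤ Fintype.card (Sym2 ι) * r ^ 2 * ∑' a : ι → ℕ, ∏ i, w i ^ a i := by
        gcongr
        · exact tsum_nonneg hP0
        · exact (sum_le_sum fun p _ => hpair p).trans_eq
            (by rw [sum_const, card_univ, nsmul_eq_mul])

theorem tsum_prod_pow_range_single_le (q : ι → Prop) (hq : ∀ i, q i → w i ≤ r) (hr : 0 ≤ r) :
    ∑' a : Set.range (fun i : {i // q i} => (Pi.single (i : ι) 1 : ι → ℕ)), ∏ j, w j ^ (a : ι → ℕ) j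
      ≤ Fintype.card ι * r := by
  classical
  have hinj : Function.Injective fun i : {i // q i} => (Pi.single (i : ι) 1 : ι → ℕ) :=
    fun i j h => Subtype.ext (by simpa [Pi.single_apply, eq_comm] using congrFun h i)
  rw [tsum_range (fun a : ι → ℕ => ∏ j, w j ^ a j) hinj, tsum_fintype]
  simp only [prod_pow_single_one]
  calc ∑ i : {i // q i}, w i ≤ ∑ _ : {i // q i}, r := sum_le_sum fun i _ => hq i i.2
    _ ≤ Fintype.card ι * r := by
        rw [sum_const, card_univ, nsmul_eq_mul]
        gcongr
        exact_mod_cast Fintype.card_subtype_le q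

theorem tsum_prod_pow_compl_le (S : Set (ι → ℕ)) (q : ι → Prop) (h0 : 0 ∈ S)
    (hS : ∀ i, q i → Pi.single i 1 ∈ S) (hw0 : ∀ i, 0 ≤ w i) (hwr : ∀ i, w i ≤ r)
    (hwq : ∀ i, ¬ q i → w i ≤ r ^ 2) (hs : Summable fun a : ι → ℕ => ∏ i, w i ^ a i) :
    ∑' a : ↥Sᶜ, ∏ i, w i ^ (a : ι → ℕ) i
      ≤ Fintype.card (Sym2 ι) * r ^ 2 * ∑' a : ι → ℕ, ∏ i, w i ^ a i + Fintype.card ι * r ^ 2 := by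
  have hP0 : ∀ a : ι → ℕ, 0 ≤ ∏ i, w i ^ a i := fun a => prod_nonneg fun i _ => pow_nonneg (hw0 i) _
  set T := {a : ι → ℕ | 2 ≤ ∑ i, a i}
  set U := Set.range fun i : {i // ¬ q i} => (Pi.single (i : ι) 1 : ι → ℕ)
  have hsub : Sᶜ ⊆ T ∪ U := by
    intro a ha
    rcases lt_or_ge (∑ i, a i) 2 with h | h
    · rcases eq_zero_or_exists_eq_single_of_sum_lt_two h with rfl | ⟨i, rfl⟩
      · exact absurd h0 ha
      · exact Or.inr ⟨⟨i, fun hi => ha (hS i hi)⟩, rfl⟩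
    · exact Or.inl h
  have hdisj : Disjoint T U := by
    rw [Set.disjoint_left]
    rintro _ ha ⟨i, rfl⟩
    simp [T] at ha
  calc ∑' a : ↥Sᶜ, ∏ i, w i ^ (a : ι → ℕ) i ≤ ∑' a : ↥(T ∪ U), ∏ i, w i ^ (a : ι → ℕ) i :=
        tsum_comp_le_tsum_of_inj (hs.subtype _) (fun _ => hP0 _) (Set.inclusion_injective hsub)
    _ = ∑' a : T, ∏ i, w i ^ (a : ι → ℕ) i + ∑' a : U, ∏ i, w i ^ (a : ι → ℕ) i :=
        Summable.tsum_union_disjoint hdisj (hs.subtype _) (hs.subtype _)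
    _ ≤ _ := add_le_add (tsum_prod_pow_of_two_le_sum_le hw0 hwr hs)
        (tsum_prod_pow_range_single_le _ hwq (sq_nonneg r))

end Estimates

theorem norm_prod_inv_one_sub_sub_tsum_subtype_le {K : Type*} [NormedField K] [CompleteSpace K]
    {n : ℕ} (z : Fin n → K) (hz : ∀ i, ‖z i‖ < 1) (S : Set (Fin n → ℕ)) :
    ‖(∏ i, (1 - z i)⁻¹) - ∑' a : S, ∏ i, z i ^ (a : Fin n → ℕ) i‖
      ≤ ∑' a : ↥Sᶜ, ∏ i, ‖z i‖ ^ (a : Fin n → ℕ) i := by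
  obtain ⟨hsum, hF⟩ := summable_norm_prod_pow_and_tsum_eq z hz
  rw [← hF, ← hsum.of_norm.tsum_subtype_add_tsum_subtype_compl S, add_sub_cancel_left]
  refine (norm_tsum_le_tsum_norm (hsum.subtype _)).trans_eq ?_
  simp only [norm_prod, norm_pow]

theorem prod_inv_one_sub_le_inv_pow {ι : Type*} [Fintype ι] {x : ι → ℝ} {s : ℝ}
    (hxs : ∀ i, x i ≤ s) (hs0 : 0 ≤ s) (hs : s < 1) {k : ℕ} (hk : Fintype.card ι ≤ k) :
    ∏ i, (1 - x i)⁻¹ ≤ ((1 - s) ^ k)⁻¹ := by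
  have hs_pos : 0 < 1 - s := by linarith
  calc ∏ i, (1 - x i)⁻¹ ≤ ∏ _i : ι, (1 - s)⁻¹ :=
        prod_le_prod (fun i _ => inv_nonneg.2 (by linarith [hxs i]))
          (fun i _ => inv_anti₀ hs_pos (by linarith [hxs i]))
    _ = ((1 - s)⁻¹) ^ Fintype.card ι := by rw [prod_const, card_univ]
    _ ≤ ((1 - s)⁻¹) ^ k := pow_le_pow_right₀ ((one_le_inv₀ hs_pos).2 (by linarith)) hk
    _ = ((1 - s) ^ k)⁻¹ := inv_pow _ _

theorem stmt_0_general (n m : ℕ) (r r0 : ℝ)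
    (hr : 0 < r) (hrr0 : r ≤ r0) (hr0 : r0 < 1)
    (z : Fin n → ℂ)
    (hz1 : ∀ i : Fin n, (i : ℕ) < m → ‖z i‖ ≤ r)
    (hz2 : ∀ i : Fin n, m ≤ (i : ℕ) → ‖z i‖ < r ^ 2)
    (S : Set (Fin n → ℕ))
    (h0 : (0 : Fin n → ℕ) ∈ S)
    (h1 : ∀ i : Fin n, (i : ℕ) < m → Pi.single i 1 ∈ S) :
    ‖(∏ i, (1 - z i)⁻¹) - ∑' a : S, ∏ i, z i ^ ((a : Fin n → ℕ) i)‖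
      ≤ ((n * (n + 1)) / (2 * (1 - r0) ^ (n + 2)) + n) * r ^ 2 := by
  have hzq : ∀ i : Fin n, ¬ (i : ℕ) < m → ‖z i‖ ≤ r ^ 2 := fun i hi => (hz2 i (not_lt.mp hi)).le
  have hzr : ∀ i, ‖z i‖ ≤ r := fun i => by
    by_cases hi : (i : ℕ) < m
    · exact hz1 i hi
    · nlinarith [hzq i hi]
  have hz_lt_one : ∀ i, ‖z i‖ < 1 := fun i => (hzr i).trans_lt (hrr0.trans_lt hr0)
  obtain ⟨hsum, hF⟩ :=
    summable_norm_prod_pow_and_tsum_eq (fun i => ‖z i‖) (by simpa using hz_lt_one)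
  calc _ ≤ ∑' a : ↥Sᶜ, ∏ i, ‖z i‖ ^ (a : Fin n → ℕ) i :=
        norm_prod_inv_one_sub_sub_tsum_subtype_le z hz_lt_one S
    _ ≤ Fintype.card (Sym2 (Fin n)) * r ^ 2 * ∑' a : Fin n → ℕ, ∏ i, ‖z i‖ ^ a i
          + Fintype.card (Fin n) * r ^ 2 :=
        tsum_prod_pow_compl_le S (fun i : Fin n => (i : ℕ) < m) h0 h1 (fun i => norm_nonneg (z i))
          hzr hzq hsum.of_norm
    _ ≤ Fintype.card (Sym2 (Fin n)) * r ^ 2 * ((1 - r0) ^ (n + 2))⁻¹ + n * r ^ 2 := by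
        rw [hF, Fintype.card_fin]
        gcongr
        exact prod_inv_one_sub_le_inv_pow (fun i => (hzr i).trans hrr0) (hr.le.trans hrr0) hr0
          (by simp)
    _ = ((n * (n + 1)) / (2 * (1 - r0) ^ (n + 2)) + n) * r ^ 2 := by
        rw [Sym2.card, Fintype.card_fin, Nat.cast_choose_two]
        push_cast
        field_simp
        ring

/-- Foster's Lemma 1.1: if `F(z₁,…,zₙ) = ∏ (1 - z i)⁻¹` is expanded as the series of
monomials `∑_{a : Fin n → ℕ} ∏ i, z i ^ a i`, if `0 < r ≤ r₀ < 1`, `m ≤ n` is a positive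
integer with `|z i| ≤ r` for `i ≤ m` and `|z i| < r²` for `i > m`, and if `f` is any
subseries (indexed by a set `S` of multi-indices) containing the terms `1 + ∑_{i≤m} z i`,
then `|F - f| ≤ [n(n+1)/(2(1-r₀)^{n+2}) + n]·r²`. -/
theorem stmt_0 (n m : ℕ) (hm : 0 < m) (hmn : m ≤ n) (r r0 : ℝ)
    (hr : 0 < r) (hrr0 : r ≤ r0) (hr0 : r0 < 1)
    (z : Fin n → ℂ)
    (hz1 : ∀ i : Fin n, (i : ℕ) < m → ‖z i‖ ≤ r)
    (hz2 : ∀ i : Fin n, m ≤ (i : ℕ) → ‖z i‖ < r ^ 2)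
    (S : Set (Fin n → ℕ))
    (h0 : (0 : Fin n → ℕ) ∈ S)
    (h1 : ∀ i : Fin n, (i : ℕ) < m → Pi.single i 1 ∈ S) :
    ‖(∏ i, (1 - z i)⁻¹) - ∑' a : S, ∏ i, z i ^ ((a : Fin n → ℕ) i)‖
      ≤ ((n * (n + 1)) / (2 * (1 - r0) ^ (n + 2)) + n) * r ^ 2 :=
  stmt_0_general n m r r0 hr hrr0 hr0 z hz1 hz2 S h0 h1
end

section
/- Let G be a finite abelian group and define the pairing ⟨·,·⟩: Ĝ × G → ℚ ∩ [0,1) by χ(g) = exp(2πi⟨χ,g⟩) with 0 ≤ ⟨χ,g⟩ < 1, extended bilinearly to ℚĜ × ℚG → ℚ. Define the Stickelberger map Θ: ℚĜ → ℚG by Θ(α) = ∑_{g ∈ G} ⟨α,g⟩·g. Then for α ∈ ℤĜ, one has Θ(α) ∈ ℤG if and only if α lies in the kernel A_Ĝ of the determinant map det: ℤĜ → Ĝ, ∑ a_χ χ ↦ ∏ χ^{a_χ}. -/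
/-- McCulloh's Proposition 4.3: with the pairing `⟨χ,g⟩ ∈ ℚ ∩ [0,1)` defined by
`χ(g) = exp(2πi⟨χ,g⟩)` and the Stickelberger map `Θ(α) = ∑_g ⟨α,g⟩·g : ℚĜ → ℚG`, an
element `α ∈ ℤĜ` has `Θ(α) ∈ ℤG` if and only if `α` lies in the kernel of the
determinant map `det : ℤĜ → Ĝ`, `∑ a_χ χ ↦ ∏ χ^{a_χ}`. -/
theorem stmt_7 (G : Type*) [CommGroup G] [Fintype G]
    (pair : (G →* ℂˣ) → G → ℚ)
    (hpair : ∀ (χ : G →* ℂˣ) (g : G), 0 ≤ pair χ g ∧ pair χ g < 1 ∧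
      ((χ g : ℂˣ) : ℂ) = Complex.exp (2 * Real.pi * Complex.I * (pair χ g : ℂ)))
    (α : (G →* ℂˣ) →₀ ℤ) :
    (∀ g : G, ∃ k : ℤ, (α.sum fun χ n => (n : ℚ) * pair χ g) = (k : ℚ)) ↔
      (α.prod fun χ n => χ ^ n) = 1 := by
  have key : ∀ g : G, (((α.prod fun χ n => χ ^ n) g : ℂˣ) : ℂ) =
      Complex.exp (2 * Real.pi * Complex.I *
        ((α.sum fun χ n => (n : ℚ) * pair χ g : ℚ) : ℂ)) := by
    intro g
    have h1 : ((α.prod fun χ n => χ ^ n) g : ℂˣ) =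
        ∏ χ ∈ α.support, (χ g) ^ (α χ) := by
      rw [Finsupp.prod]
      rw [MonoidHom.finset_prod_apply]
      exact Finset.prod_congr rfl fun x _ => (rfl : (x ^ α x) g = x g ^ α x)
    rw [h1]
    push_cast
    rw [Finsupp.sum, Finset.mul_sum, Complex.exp_sum]
    apply Finset.prod_congr rfl
    intro χ _
    rw [(hpair χ g).2.2, ← Complex.exp_int_mul]
    ring_nf
  constructor
  · intro h
    ext g
    obtain ⟨k, hk⟩ := h g
    have h2 : Complex.exp (2 * Real.pi * Complex.I * ((k : ℚ) : ℂ)) = 1 := by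
      push_cast
      rw [show (2 : ℂ) * Real.pi * Complex.I * (k : ℂ) = (k : ℂ) * (2 * Real.pi * Complex.I) by ring]
      exact Complex.exp_int_mul_two_pi_mul_I k
    rw [key g, hk]
    simpa using h2
  · intro h g
    have := key g
    rw [h] at this
    simp only [MonoidHom.one_apply, Units.val_one] at this
    obtain ⟨n, hn⟩ := Complex.exp_eq_one_iff.mp this.symm
    refine ⟨n, ?_⟩
    have h2 : ((α.sum fun χ n => (n : ℚ) * pair χ g : ℚ) : ℂ) = (n : ℂ) := by
      have hne : (2 : ℂ) * Real.pi * Complex.I ≠ 0 := by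
        simp [Real.pi_ne_zero, Complex.I_ne_zero]
      exact mul_left_cancel₀ hne (hn.trans (mul_comm _ _))
    exact_mod_cast h2
end

section
/- With notation as in the resolvend setting: elements a_1, a_2 ∈ Map(G, K^c) with r_G(a_1), r_G(a_2) ∈ (K^cG)^× generate the same G-Galois K-algebra as a KG-module if and only if r_G(a_1) = b·r_G(a_2) for some b ∈ (KG)^×. -/
/-!
Write `r₁, r₂` for the resolvends. If `r₁ = b r₂` with `b` a unit of `KG`, then
`KG·r₁ = KG·r₂`. Conversely, if these sets coincide then `r₁ = x r₂` and `r₂ = y r₁` for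
some `x, y ∈ KG`, so `(xy) r₁ = r₁`; since `r₁` is invertible, `xy = 1` in `K^cG`, hence in
`KG` because `KG → K^cG` is injective.
-/

open Function

namespace MonoidHom

variable {N M : Type*} [CommMonoid N] [Monoid M] (f : N →* M)

lemma setOf_mul_subset_of_eq_mul {r₁ r₂ : M} {b : N} (h : r₁ = f b * r₂) :
    {y | ∃ x, y = f x * r₁} ⊆ {y | ∃ x, y = f x * r₂} := by
  rintro _ ⟨x, rfl⟩
  exact ⟨x * b, by rw [h, map_mul, mul_assoc]⟩

theorem setOf_mul_eq_setOf_mul_iff (hf : Injective f) {r₁ r₂ : M} (hr₁ : IsRightRegular r₁) :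
    {y | ∃ x, y = f x * r₁} = {y | ∃ x, y = f x * r₂} ↔ ∃ b, IsUnit b ∧ r₁ = f b * r₂ := by
  constructor
  · intro h
    obtain ⟨x, hx⟩ : r₁ ∈ {y | ∃ x, y = f x * r₂} := h ▸ ⟨1, by rw [map_one, one_mul]⟩
    obtain ⟨y, hy⟩ : r₂ ∈ {y | ∃ x, y = f x * r₁} := h ▸ ⟨1, by rw [map_one, one_mul]⟩
    have hxy : x * y = 1 := hf <| hr₁ <| by
      simp only [map_mul, map_one, one_mul, mul_assoc, ← hy, ← hx]
    exact ⟨x, .of_mul_eq_one y hxy, hx⟩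
  · rintro ⟨_, ⟨u, rfl⟩, h⟩
    refine (setOf_mul_subset_of_eq_mul f h).antisymm (setOf_mul_subset_of_eq_mul f (b := ↑u⁻¹) ?_)
    rw [h, ← mul_assoc, ← map_mul, Units.inv_mul, map_one, one_mul]

end MonoidHom

namespace MonoidAlgebra

lemma lift_of_eq_mapAlgHom (K C G : Type*) [CommSemiring K] [Semiring C] [Algebra K C]
    [Monoid G] : lift K C[G] G (of C G) = mapAlgHom G (Algebra.ofId K C) := by
  ext; simp

lemma lift_of_injective {K C G : Type*} [CommSemiring K] [Semiring C] [Algebra K C] [Monoid G]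
    (h : Injective (algebraMap K C)) : Injective (lift K C[G] G (of C G)) := by
  rw [lift_of_eq_mapAlgHom]
  exact map_injective (algebraMap K C).toAddMonoidHom h

end MonoidAlgebra

theorem stmt_16_general (K C : Type*) [Field K] [Field C] [Algebra K C]
    (G : Type*) [CommGroup G] [Fintype G]
    (a₁ a₂ : G → C)
    (h₁ : IsUnit (∑ s : G, (MonoidAlgebra.single s⁻¹ (a₁ s) : MonoidAlgebra C G))) :
    ({y : MonoidAlgebra C G | ∃ x : MonoidAlgebra K G,
        y = (MonoidAlgebra.lift K (MonoidAlgebra C G) G (MonoidAlgebra.of C G)) x *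
          ∑ s : G, MonoidAlgebra.single s⁻¹ (a₁ s)} =
      {y : MonoidAlgebra C G | ∃ x : MonoidAlgebra K G,
        y = (MonoidAlgebra.lift K (MonoidAlgebra C G) G (MonoidAlgebra.of C G)) x *
          ∑ s : G, MonoidAlgebra.single s⁻¹ (a₂ s)}) ↔
      ∃ b : MonoidAlgebra K G, IsUnit b ∧
        (∑ s : G, (MonoidAlgebra.single s⁻¹ (a₁ s) : MonoidAlgebra C G)) =
          (MonoidAlgebra.lift K (MonoidAlgebra C G) G (MonoidAlgebra.of C G)) b *
            ∑ s : G, MonoidAlgebra.single s⁻¹ (a₂ s) :=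
  MonoidHom.setOf_mul_eq_setOf_mul_iff
    (MonoidAlgebra.lift K (MonoidAlgebra C G) G (MonoidAlgebra.of C G)).toMonoidHom
    (MonoidAlgebra.lift_of_injective (algebraMap K C).injective) h₁.isRegular.right

/-- Elements `a₁, a₂ : G → K^c` with invertible resolvends generate the same G-Galois
K-algebra as a KG-module (i.e. the KG-submodules `KG·r_G(a₁)` and `KG·r_G(a₂)` of `K^cG`
coincide) if and only if `r_G(a₁) = b·r_G(a₂)` for some unit `b ∈ (KG)^×`. -/
theorem stmt_16 (K C : Type*) [Field K] [Field C] [Algebra K C]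
    (G : Type*) [CommGroup G] [Fintype G] [DecidableEq G]
    (a₁ a₂ : G → C)
    (h₁ : IsUnit (∑ s : G, (MonoidAlgebra.single s⁻¹ (a₁ s) : MonoidAlgebra C G)))
    (h₂ : IsUnit (∑ s : G, (MonoidAlgebra.single s⁻¹ (a₂ s) : MonoidAlgebra C G))) :
    ({y : MonoidAlgebra C G | ∃ x : MonoidAlgebra K G,
        y = (MonoidAlgebra.lift K (MonoidAlgebra C G) G (MonoidAlgebra.of C G)) x *
          ∑ s : G, MonoidAlgebra.single s⁻¹ (a₁ s)} =
      {y : MonoidAlgebra C G | ∃ x : MonoidAlgebra K G,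
        y = (MonoidAlgebra.lift K (MonoidAlgebra C G) G (MonoidAlgebra.of C G)) x *
          ∑ s : G, MonoidAlgebra.single s⁻¹ (a₂ s)}) ↔
      ∃ b : MonoidAlgebra K G, IsUnit b ∧
        (∑ s : G, (MonoidAlgebra.single s⁻¹ (a₁ s) : MonoidAlgebra C G)) =
          (MonoidAlgebra.lift K (MonoidAlgebra C G) G (MonoidAlgebra.of C G)) b *
            ∑ s : G, MonoidAlgebra.single s⁻¹ (a₂ s) :=
  stmt_16_general K C G a₁ a₂ h₁
end
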